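/- The function F(x) = Σ_{i=0}^{∞} x_i · 4^{Σ_{j=0}^{i−1} x_j} · (Σ_{j=i}^{∞} (1 − x_j)/2^j)^2 (binary digits (x_i) of x, finite expansion for dyadic rationals) is continuous at 0 and at every point of (0,1) whose binary expansion is infinite, and discontinuous at every dyadic rational in (0,1]. -/

import Mathlib

/-- The `i`-th binary digit of `x ∈ [0,1]` (with `digit x 0` the units digit),
using the finite (terminating) expansion at dyadic rationals. -/
noncomputable def digit (x : ℝ) (i : ℕ) : ℕ := (⌊2 ^ i * x⌋).toNat % 2

/-- The tail sum `Σ_{j=i}^{∞} (1 - x_j)/2^j`. -/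
noncomputable def tail (x : ℝ) (i : ℕ) : ℝ :=
  ∑' j : ℕ, (1 - (digit x (i + j) : ℝ)) / 2 ^ (i + j)

/-- The function `F` from the cellular automaton `T_a`. -/
noncomputable def F (x : ℝ) : ℝ :=
  ∑' i : ℕ, (digit x i : ℝ) * 4 ^ (∑ j ∈ Finset.range i, digit x j) * (tail x i) ^ 2

/-! Write `Sᵢ` for the number of ones among the first `i` digits and `tᵢ = tail x i`. The
potential `Φᵢ = 4^Sᵢ (4 / 4ⁱ - tᵢ²)` is nonnegative and drops by at least three times the `i`-th
summand at every step, so the summands from `N` on add up to at most `Φ_N / 3 ≤ 4^(S_N + 1) / 4^N`.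
Every expansion has infinitely many zero digits, so this bound becomes small for suitable `N`.
Wherever the first `N` digits are locally constant (at `0` from the right, and at non-dyadic
points) the first `N` summands are continuous, since there `tᵢ` only moves by `x - y`; hence `F`
is continuous. At `x = n / 2ᵏ` with `n` odd, every `y` slightly left of `x` has digit `k` equal
to `0` and `tail y (k + 1) = x - y`, so its summands from `k` on add up to at most a third of the
`k`-th summand `4^Sₖ / 4ᵏ` of `x`: `F` jumps at `x` from the left. -/

open Filter Topology Finset

noncomputable def truncation (x : ℝ) (i : ℕ) : ℝ := ∑ j ∈ range i, (digit x j : ℝ) / 2 ^ j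

noncomputable def onesBefore (x : ℝ) (i : ℕ) : ℕ := ∑ j ∈ range i, digit x j

theorem digit_le_one (x : ℝ) (i : ℕ) : digit x i ≤ 1 :=
  Nat.lt_succ_iff.mp (Nat.mod_lt _ two_pos)

theorem digit_eq_of_floor_eq {x : ℝ} {i m : ℕ} (h : ⌊2 ^ i * x⌋ = m) : digit x i = m % 2 := by
  simp [digit, h]

theorem digit_cast_eq_emod {x : ℝ} (hx : 0 ≤ x) (i : ℕ) :
    (digit x i : ℤ) = ⌊2 ^ i * x⌋ % 2 := by
  have : 0 ≤ ⌊(2 : ℝ) ^ i * x⌋ := Int.floor_nonneg.mpr (by positivity)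
  simp [digit, Int.toNat_of_nonneg this]

theorem two_mul_floor_add_emod_two (y : ℝ) : 2 * ⌊y⌋ + ⌊2 * y⌋ % 2 = ⌊2 * y⌋ := by
  have h₁ : 2 * ⌊y⌋ ≤ ⌊2 * y⌋ := Int.le_floor.mpr (by push_cast; linarith [Int.floor_le y])
  have h₂ : ⌊2 * y⌋ < 2 * ⌊y⌋ + 2 :=
    Int.floor_lt.mpr (by push_cast; linarith [Int.lt_floor_add_one y])
  omega

theorem truncation_succ (x : ℝ) (i : ℕ) :
    truncation x (i + 1) = truncation x i + digit x i / 2 ^ i :=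
  sum_range_succ _ _

theorem onesBefore_succ (x : ℝ) (i : ℕ) : onesBefore x (i + 1) = onesBefore x i + digit x i :=
  sum_range_succ _ _

theorem truncation_congr {x y : ℝ} {i : ℕ} (h : ∀ j < i, digit y j = digit x j) :
    truncation y i = truncation x i :=
  sum_congr rfl fun j hj => by rw [h j (mem_range.mp hj)]

theorem onesBefore_congr {x y : ℝ} {i : ℕ} (h : ∀ j < i, digit y j = digit x j) :
    onesBefore y i = onesBefore x i :=
  sum_congr rfl fun j hj => by rw [h j (mem_range.mp hj)]

theorem truncation_succ_eq_floor {x : ℝ} (hx : x ∈ Set.Ico (0 : ℝ) 2) (i : ℕ) :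
    truncation x (i + 1) = ⌊2 ^ i * x⌋ / 2 ^ i := by
  induction i with
  | zero =>
    have h₀ : 0 ≤ ⌊x⌋ := Int.floor_nonneg.mpr hx.1
    have h₁ : ⌊x⌋ < 2 := Int.floor_lt.mpr (by exact_mod_cast hx.2)
    have h := digit_cast_eq_emod hx.1 0
    simp only [pow_zero, one_mul] at h
    have : (digit x 0 : ℤ) = ⌊x⌋ := by omega
    simp [truncation, ← this]
  | succ i ih =>
    have h := digit_cast_eq_emod hx.1 (i + 1)
    have hfloor := two_mul_floor_add_emod_two (2 ^ i * x)
    rw [← mul_assoc, ← pow_succ'] at hfloor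
    rw [truncation_succ, ih, ← hfloor, ← h]
    push_cast
    field_simp
    ring

theorem truncation_le {x : ℝ} (hx : x ∈ Set.Ico (0 : ℝ) 2) (i : ℕ) : truncation x i ≤ x := by
  cases i with
  | zero => simpa [truncation] using hx.1
  | succ i =>
    rw [truncation_succ_eq_floor hx, div_le_iff₀ (by positivity)]
    linarith [Int.floor_le ((2 : ℝ) ^ i * x)]

theorem lt_truncation_add {x : ℝ} (hx : x ∈ Set.Ico (0 : ℝ) 2) (i : ℕ) :
    x < truncation x i + 2 / 2 ^ i := by
  cases i with
  | zero => simpa [truncation] using hx.2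
  | succ i =>
    have h2 : (2 : ℝ) / 2 ^ (i + 1) = 1 / 2 ^ i := by rw [pow_succ]; field_simp
    rw [truncation_succ_eq_floor hx, h2, ← add_div, lt_div_iff₀ (by positivity)]
    linarith [Int.lt_floor_add_one ((2 : ℝ) ^ i * x)]

theorem hasSum_digit_div_two_pow {x : ℝ} (hx : x ∈ Set.Ico (0 : ℝ) 2) :
    HasSum (fun j => (digit x j : ℝ) / 2 ^ j) x := by
  refine (hasSum_iff_tendsto_nat_of_nonneg (fun j => by positivity) x).2 ?_
  have hlow : Tendsto (fun i : ℕ => x - 2 * (1 / 2 : ℝ) ^ i) atTop (𝓝 x) := by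
    simpa using tendsto_const_nhds.sub
      ((tendsto_pow_atTop_nhds_zero_of_lt_one (r := (1 / 2 : ℝ)) (by norm_num)
        (by norm_num)).const_mul 2)
  refine tendsto_of_tendsto_of_tendsto_of_le_of_le hlow tendsto_const_nhds (fun i => ?_)
    (truncation_le hx)
  have := lt_truncation_add hx i
  rw [div_pow, one_pow, ← div_eq_mul_one_div]
  exact sub_le_iff_le_add.mpr this.le

theorem tail_eq {x : ℝ} (hx : x ∈ Set.Ico (0 : ℝ) 2) (i : ℕ) :
    tail x i = 2 / 2 ^ i - x + truncation x i := by
  have hgeom : HasSum (fun j : ℕ => 1 / (2 : ℝ) ^ (i + j)) (2 / 2 ^ i) := by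
    convert hasSum_geometric_two' (2 / 2 ^ i) using 2 with j
    rw [pow_add]; field_simp
  have hdig : HasSum (fun j : ℕ => (digit x (i + j) : ℝ) / 2 ^ (i + j)) (x - truncation x i) := by
    simpa only [add_comm _ i, truncation] using
      (hasSum_nat_add_iff' (f := fun j => (digit x j : ℝ) / 2 ^ j) i).2
        (hasSum_digit_div_two_pow hx)
  rw [tail, ((hgeom.sub hdig).congr_fun fun j => by ring).tsum_eq]
  ring

theorem tail_pos {x : ℝ} (hx : x ∈ Set.Ico (0 : ℝ) 2) (i : ℕ) : 0 < tail x i := by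
  rw [tail_eq hx]
  linarith [lt_truncation_add hx i]

theorem tail_le {x : ℝ} (hx : x ∈ Set.Ico (0 : ℝ) 2) (i : ℕ) : tail x i ≤ 2 / 2 ^ i := by
  rw [tail_eq hx]
  linarith [truncation_le hx i]

theorem tail_succ {x : ℝ} (hx : x ∈ Set.Ico (0 : ℝ) 2) (i : ℕ) :
    tail x (i + 1) = tail x i - (1 - digit x i) / 2 ^ i := by
  rw [tail_eq hx, tail_eq hx, truncation_succ, pow_succ]
  field_simp
  ring

theorem tail_eq_tail_add_of_digit_eq {x y : ℝ} (hx : x ∈ Set.Ico (0 : ℝ) 2) (hy : y ∈ Set.Ico (0 : ℝ) 2)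
    {i : ℕ} (h : ∀ j < i, digit y j = digit x j) : tail y i = tail x i + (x - y) := by
  rw [tail_eq hx, tail_eq hy, truncation_congr h]
  ring

theorem exists_digit_eq_zero {x : ℝ} (hx : x ∈ Set.Ico (0 : ℝ) 2) (m : ℕ) :
    ∃ i, m ≤ i ∧ digit x i = 0 := by
  by_contra! h
  have hone : ∀ j, digit x (m + j) = 1 := fun j =>
    le_antisymm (digit_le_one x _) (Nat.one_le_iff_ne_zero.mpr (h _ (Nat.le_add_right m j)))
  have : tail x m = 0 := by simp [tail, hone]
  exact (tail_pos hx m).ne' this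

noncomputable def summand (x : ℝ) (i : ℕ) : ℝ := digit x i * 4 ^ onesBefore x i * tail x i ^ 2

noncomputable def potential (x : ℝ) (i : ℕ) : ℝ := 4 ^ onesBefore x i * (4 / 4 ^ i - tail x i ^ 2)

theorem F_eq_tsum_summand (x : ℝ) : F x = ∑' i, summand x i := rfl

theorem summand_nonneg (x : ℝ) (i : ℕ) : 0 ≤ summand x i := by
  unfold summand; positivity

theorem potential_nonneg {x : ℝ} (hx : x ∈ Set.Ico (0 : ℝ) 2) (i : ℕ) : 0 ≤ potential x i := by
  have h4 : (4 : ℝ) / 4 ^ i = (2 / 2 ^ i) ^ 2 := by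
    rw [div_pow, ← pow_mul, mul_comm, pow_mul]; norm_num
  have := tail_pos hx i
  have := tail_le hx i
  unfold potential
  rw [h4]
  have : tail x i ^ 2 ≤ (2 / 2 ^ i) ^ 2 := by gcongr
  positivity

theorem potential_le (x : ℝ) (i : ℕ) : potential x i ≤ 4 ^ (onesBefore x i + 1) / 4 ^ i := by
  unfold potential
  rw [pow_succ (4 : ℝ), mul_div_assoc]
  gcongr
  linarith [sq_nonneg (tail x i)]

/-- With `t = tail x i` and `h = 2⁻ⁱ` this is `2th ≤ 4h²` when the digit is `0`, and an identity
when it is `1`. -/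
theorem potential_succ_add_le {x : ℝ} (hx : x ∈ Set.Ico (0 : ℝ) 2) (i : ℕ) :
    potential x (i + 1) + 3 * summand x i ≤ potential x i := by
  have ht := tail_le hx i
  have hp : (0 : ℝ) < 2 ^ i := by positivity
  have h4 : (4 : ℝ) ^ i = (2 ^ i) ^ 2 := by rw [← pow_mul, mul_comm, pow_mul]; norm_num
  unfold potential summand
  rw [onesBefore_succ, tail_succ hx, pow_succ (4 : ℝ) i, h4]
  rcases Nat.le_one_iff_eq_zero_or_eq_one.mp (digit_le_one x i) with h | h
  · rw [h]
    have : tail x i * 2 ^ i ≤ 2 := (le_div_iff₀ hp).mp ht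
    have hstep : 4 / (((2 : ℝ) ^ i) ^ 2 * 4) - (tail x i - (1 - 0) / 2 ^ i) ^ 2
        ≤ 4 / (2 ^ i) ^ 2 - tail x i ^ 2 := by
      field_simp
      nlinarith
    simp only [Nat.cast_zero, zero_mul, mul_zero, add_zero]
    exact mul_le_mul_of_nonneg_left hstep (by positivity)
  · rw [h]
    apply le_of_eq
    field_simp
    ring

theorem three_mul_sum_summand_add_potential_le {x : ℝ} (hx : x ∈ Set.Ico (0 : ℝ) 2) (N M : ℕ) :
    3 * ∑ j ∈ range M, summand x (N + j) + potential x (N + M) ≤ potential x N := by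
  induction M with
  | zero => simp
  | succ M ih =>
    rw [sum_range_succ, ← add_assoc]
    linarith [potential_succ_add_le hx (N + M)]

theorem summable_summand {x : ℝ} (hx : x ∈ Set.Ico (0 : ℝ) 2) : Summable (summand x) :=
  summable_of_sum_range_le (c := potential x 0 / 3) (summand_nonneg x) fun M => by
    have := three_mul_sum_summand_add_potential_le hx 0 M
    simp only [zero_add] at this
    linarith [potential_nonneg hx M]

theorem tsum_summand_add_le {x : ℝ} (hx : x ∈ Set.Ico (0 : ℝ) 2) (N : ℕ) :
    ∑' j, summand x (N + j) ≤ potential x N / 3 :=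
  Real.tsum_le_of_sum_range_le (fun j => summand_nonneg x _) fun M => by
    linarith [three_mul_sum_summand_add_potential_le hx N M, potential_nonneg hx (N + M)]

theorem sum_range_summand_le_F {x : ℝ} (hx : x ∈ Set.Ico (0 : ℝ) 2) (N : ℕ) :
    ∑ i ∈ range N, summand x i ≤ F x :=
  (summable_summand hx).sum_le_tsum _ fun i _ => summand_nonneg x i

theorem F_le_sum_add_potential {x : ℝ} (hx : x ∈ Set.Ico (0 : ℝ) 2) (N : ℕ) :
    F x ≤ ∑ i ∈ range N, summand x i + potential x N / 3 := by
  rw [F_eq_tsum_summand, ← (summable_summand hx).sum_add_tsum_nat_add N]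
  simpa only [add_comm _ N] using add_le_add_right (tsum_summand_add_le hx N) _

theorem onesBefore_add_le_of_le {x : ℝ} {K M N : ℕ} (h : onesBefore x M + K ≤ M)
    (hMN : M ≤ N) : onesBefore x N + K ≤ N := by
  induction N, hMN using Nat.le_induction with
  | base => exact h
  | succ N _ ih =>
    rw [onesBefore_succ]
    have := digit_le_one x N
    omega

theorem exists_onesBefore_add_le {x : ℝ} (hx : x ∈ Set.Ico (0 : ℝ) 2) (K : ℕ) :
    ∃ M, onesBefore x M + K ≤ M := by
  induction K with
  | zero => exact ⟨0, by simp [onesBefore]⟩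
  | succ K ih =>
    obtain ⟨M, hM⟩ := ih
    obtain ⟨i, hMi, hi⟩ := exists_digit_eq_zero hx M
    have := onesBefore_add_le_of_le hM hMi
    exact ⟨i + 1, by rw [onesBefore_succ, hi]; omega⟩

theorem exists_four_pow_onesBefore_div_lt {x ε : ℝ} (hx : x ∈ Set.Ico (0 : ℝ) 2) (hε : 0 < ε) :
    ∃ M, (4 : ℝ) ^ (onesBefore x M + 1) / 4 ^ M < ε := by
  obtain ⟨K, hK⟩ := exists_pow_lt_of_lt_one (by positivity : 0 < ε / 4)
    (by norm_num : (1 / 4 : ℝ) < 1)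
  obtain ⟨M, hM⟩ := exists_onesBefore_add_le hx K
  refine ⟨M, ?_⟩
  calc (4 : ℝ) ^ (onesBefore x M + 1) / 4 ^ M
      ≤ 4 ^ (onesBefore x M + 1) / 4 ^ (onesBefore x M + K) := by gcongr; norm_num
    _ = 4 * (1 / 4) ^ K := by
        rw [pow_add, pow_succ, one_div_pow]
        field_simp
        ring
    _ < ε := by linarith

theorem continuousWithinAt_sum_summand {s : Set ℝ} {x : ℝ} (hs : s ⊆ Set.Ico 0 2)
    (hx : x ∈ Set.Ico (0 : ℝ) 2) {M : ℕ}
    (hdig : ∀ᶠ y in 𝓝[s] x, ∀ i < M, digit y i = digit x i) :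
    ContinuousWithinAt (fun y => ∑ i ∈ range M, summand y i) s x := by
  have hcont : Continuous fun y : ℝ =>
      ∑ i ∈ range M, (digit x i : ℝ) * 4 ^ onesBefore x i * (tail x i + (x - y)) ^ 2 := by
    fun_prop
  refine hcont.continuousWithinAt.congr_of_eventuallyEq ?_ (by simp [summand])
  filter_upwards [hdig, self_mem_nhdsWithin] with y hy hys
  refine sum_congr rfl fun i hi => ?_
  have hbelow : ∀ j < i, digit y j = digit x j := fun j hj => hy j (hj.trans (mem_range.mp hi))
  rw [summand, hy i (mem_range.mp hi), onesBefore_congr hbelow, tail_eq_tail_add_of_digit_eq hx (hs hys) hbelow]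

theorem continuousWithinAt_F_of_eventually_digit_eq {s : Set ℝ} {x : ℝ} (hs : s ⊆ Set.Ico 0 2)
    (hx : x ∈ s) (hdig : ∀ M, ∀ᶠ y in 𝓝[s] x, ∀ i < M, digit y i = digit x i) :
    ContinuousWithinAt F s x := by
  refine continuousWithinAt_of_locally_uniform_approx_of_continuousWithinAt hx fun u hu => ?_
  obtain ⟨ε, hε, hεu⟩ := Metric.mem_uniformity_dist.mp hu
  obtain ⟨M, hM⟩ := exists_four_pow_onesBefore_div_lt (hs hx) hε
  refine ⟨_, inter_mem self_mem_nhdsWithin (hdig M), _,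
    continuousWithinAt_sum_summand hs (hs hx) (hdig M), fun y ⟨hys, hy⟩ => hεu ?_⟩
  have h₁ := sum_range_summand_le_F (hs hys) M
  have h₂ := F_le_sum_add_potential (hs hys) M
  have h₃ := potential_le y M
  have h₄ := potential_nonneg (hs hys) M
  rw [onesBefore_congr hy] at h₃
  rw [Real.dist_eq, abs_lt]
  constructor <;> linarith

theorem eventually_digit_eq_digit_zero (M : ℕ) :
    ∀ᶠ y in 𝓝[≥] (0 : ℝ), ∀ i < M, digit y i = digit 0 i := by
  filter_upwards [self_mem_nhdsWithin,
    nhdsWithin_le_nhds (Iio_mem_nhds (by positivity : (0 : ℝ) < 1 / 2 ^ M))]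
    with y (hy0 : 0 ≤ y) (hyM : y < 1 / 2 ^ M) i hi
  have : 2 ^ i * y < 1 :=
    calc 2 ^ i * y ≤ 2 ^ M * y := by gcongr; norm_num
      _ < 2 ^ M * (1 / 2 ^ M) := by gcongr
      _ = 1 := by field_simp
  rw [digit_eq_of_floor_eq (m := 0) (Int.floor_eq_zero_iff.mpr ⟨by positivity, this⟩)]
  simp [digit]

theorem eventually_floor_eq {a : ℝ} (h : ∀ m : ℤ, a ≠ m) : ∀ᶠ b in 𝓝 a, ⌊b⌋ = ⌊a⌋ :=
  eventually_of_mem (Ioo_mem_nhds ((Int.floor_le a).lt_of_ne (h _).symm) (Int.lt_floor_add_one a))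
    fun _ hb => Int.floor_eq_iff.mpr ⟨hb.1.le, hb.2⟩

theorem eventually_digit_eq {x : ℝ} {M : ℕ} (h : ∀ i < M, ∀ m : ℤ, 2 ^ i * x ≠ m) :
    ∀ᶠ y in 𝓝 x, ∀ i < M, digit y i = digit x i := by
  have : ∀ i ∈ Set.Iio M, ∀ᶠ y in 𝓝 x, digit y i = digit x i := fun i hi =>
    ((continuous_const_mul _).tendsto x).eventually (eventually_floor_eq (h i hi)) |>.mono
      fun y hy => by simp only [digit, hy]
  simpa using (eventually_all_finite (Set.finite_Iio M)).2 this

theorem two_pow_mul_ne_intCast {x : ℝ} (hx : 0 < x) (h : ¬∃ n k : ℕ, x = n / 2 ^ k) (i : ℕ)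
    (m : ℤ) : 2 ^ i * x ≠ m := by
  intro hm
  have hm0 : 0 ≤ m := by exact_mod_cast (show (0 : ℝ) ≤ m by rw [← hm]; positivity)
  refine h ⟨m.toNat, i, ?_⟩
  rw [eq_div_iff (by positivity), mul_comm, hm]
  exact_mod_cast (Int.toNat_of_nonneg hm0).symm

theorem exists_odd_eq_div_two_pow {x : ℝ} (h0 : 0 < x) (h2 : x < 2)
    (h : ∃ n k : ℕ, x = n / 2 ^ k) : ∃ n k : ℕ, Odd n ∧ x = n / 2 ^ k := by
  obtain ⟨n, k, rfl⟩ := h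
  have hn : n ≠ 0 := by rintro rfl; simp at h0
  obtain ⟨v, m, hm, rfl⟩ := Nat.exists_eq_two_pow_mul_odd hn
  rcases le_or_gt v k with hvk | hkv
  · refine ⟨m, k - v, hm, ?_⟩
    rw [← Nat.sub_add_cancel hvk, pow_add, Nat.add_sub_cancel]
    push_cast
    field_simp
  · have hx : ((2 ^ v * m : ℕ) : ℝ) / 2 ^ k = 2 ^ (v - k) * m := by
      rw [← Nat.sub_add_cancel hkv.le, pow_add, Nat.add_sub_cancel]
      push_cast
      field_simp
    have h2le : (2 : ℝ) ≤ 2 ^ (v - k) := le_self_pow₀ one_le_two (by omega)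
    have hm1 : (1 : ℝ) ≤ m := by exact_mod_cast hm.pos
    rw [hx] at h2
    nlinarith

theorem two_pow_mul_ne_intCast_of_odd {x : ℝ} {n k : ℕ} (hn : Odd n) (hxn : 2 ^ k * x = n)
    {i : ℕ} (hi : i < k) (m : ℤ) : 2 ^ i * x ≠ m := by
  intro hm
  have hreal : (n : ℝ) = 2 * (2 ^ (k - i - 1) * m) := by
    rw [← hm, ← hxn, ← mul_assoc, ← mul_assoc, ← pow_succ', ← pow_add]
    congr 2
    omega
  have hint : (n : ℤ) = 2 * (2 ^ (k - i - 1) * m) := by exact_mod_cast hreal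
  have := Nat.odd_iff.mp hn
  omega

theorem summand_eq_zero {x : ℝ} {i : ℕ} (h : digit x i = 0) : summand x i = 0 := by
  simp [summand, h]

theorem sum_range_summand_add_le_F {x : ℝ} {n k : ℕ} (hn : Odd n) (hxn : 2 ^ k * x = n)
    (hx : x ∈ Set.Ico (0 : ℝ) 2) :
    ∑ i ∈ range k, summand x i + 4 ^ onesBefore x k / 4 ^ k ≤ F x := by
  have hfloor : ⌊2 ^ k * x⌋ = n := by rw [hxn, Int.floor_natCast]
  have hdigit : digit x k = 1 := by rw [digit_eq_of_floor_eq hfloor, Nat.odd_iff.mp hn]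
  have htail : tail x k = 1 / 2 ^ k := by
    have hstep := tail_succ hx k
    rw [hdigit, Nat.cast_one, sub_self, zero_div, sub_zero] at hstep
    rw [← hstep, tail_eq hx, truncation_succ_eq_floor hx, hfloor, Int.cast_natCast, ← hxn,
      pow_succ]
    field_simp
    ring
  have hsummand : summand x k = 4 ^ onesBefore x k / 4 ^ k := by
    rw [summand, hdigit, htail, div_pow, ← pow_mul, mul_comm k, pow_mul]
    norm_num
    ring
  simpa [sum_range_succ, hsummand] using sum_range_summand_le_F hx (k + 1)

theorem Ico_sub_one_div_two_pow_subset {x : ℝ} {n k : ℕ} (hn : 0 < n) (hxn : 2 ^ k * x = n)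
    (hx : x < 2) : Set.Ico (x - 1 / 2 ^ k) x ⊆ Set.Ico 0 2 := by
  have h2k : (0 : ℝ) < 2 ^ k := by positivity
  have hn1 : (1 : ℝ) ≤ n := by exact_mod_cast hn
  have : 1 / 2 ^ k ≤ x := by rw [div_le_iff₀ h2k, mul_comm, hxn]; exact hn1
  exact fun y hy => ⟨by linarith [hy.1], hy.2.trans hx⟩

theorem F_le_sum_add_of_mem_Ico {x y : ℝ} {n k : ℕ} (hn : Odd n) (hxn : 2 ^ k * x = n)
    (hx : x < 2) (hy : y ∈ Set.Ico (x - 1 / 2 ^ k) x) (hdig : ∀ i < k, digit y i = digit x i) :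
    F y ≤ ∑ i ∈ range k, summand y i + 4 ^ onesBefore x k / 4 ^ k / 3 := by
  have hy' := Ico_sub_one_div_two_pow_subset hn.pos hxn hx hy
  have hfloor : ⌊2 ^ k * y⌋ = (n - 1 : ℕ) := by
    have h2k : (0 : ℝ) < 2 ^ k := by positivity
    have hlow : 2 ^ k * (x - 1 / 2 ^ k) = n - 1 := by rw [mul_sub, hxn]; field_simp
    rw [Int.floor_eq_iff]
    push_cast [hn.pos]
    constructor
    · rw [← hlow]; exact mul_le_mul_of_nonneg_left hy.1 h2k.le
    · rw [sub_add_cancel, ← hxn]; exact mul_lt_mul_of_pos_left hy.2 h2k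
  have hdigit : digit y k = 0 := by
    rw [digit_eq_of_floor_eq hfloor]
    have := Nat.odd_iff.mp hn
    omega
  have htail : tail y (k + 1) = x - y := by
    rw [tail_eq hy', truncation_succ_eq_floor hy', hfloor, Int.cast_natCast,
      Nat.cast_sub hn.pos, Nat.cast_one, ← hxn, pow_succ]
    field_simp
    ring
  have hones : onesBefore y (k + 1) = onesBefore x k := by
    rw [onesBefore_succ, hdigit, add_zero, onesBefore_congr hdig]
  have hpot : potential y (k + 1) ≤ 4 ^ onesBefore x k / 4 ^ k := by
    have h4 : (4 : ℝ) / (4 ^ k * 4) = 1 / 4 ^ k := by field_simp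
    rw [potential, hones, htail, pow_succ (4 : ℝ) k, h4,
      div_eq_mul_one_div (4 ^ onesBefore x k : ℝ)]
    exact mul_le_mul_of_nonneg_left (sub_le_self _ (sq_nonneg _)) (by positivity)
  have := F_le_sum_add_potential hy' (k + 1)
  rw [sum_range_succ, summand_eq_zero hdigit, add_zero] at this
  linarith

theorem not_continuousWithinAt_Iio_F {x : ℝ} {n k : ℕ} (hn : Odd n) (hxn : x = n / 2 ^ k)
    (hx : x < 2) : ¬ContinuousWithinAt F (Set.Iio x) x := by
  intro hcont
  have hxn' : 2 ^ k * x = n := by rw [hxn]; field_simp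
  set s := Set.Ico (x - 1 / 2 ^ k) x
  have hs := Ico_sub_one_div_two_pow_subset hn.pos hxn' hx
  have hx0 : x ∈ Set.Ico (0 : ℝ) 2 := ⟨by rw [hxn]; positivity, hx⟩
  have : (𝓝[s] x).NeBot := by
    rw [nhdsWithin_Ico_eq_nhdsLT (sub_lt_self x (by positivity))]
    infer_instance
  have hdig : ∀ᶠ y in 𝓝[s] x, ∀ i < k, digit y i = digit x i :=
    nhdsWithin_le_nhds (eventually_digit_eq fun _ hi => two_pow_mul_ne_intCast_of_odd hn hxn' hi)
  have hlim := (hcont.mono Set.Ico_subset_Iio_self).sub (continuousWithinAt_sum_summand hs hx0 hdig)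
  have hle : F x - ∑ i ∈ range k, summand x i ≤ 4 ^ onesBefore x k / 4 ^ k / 3 := by
    refine le_of_tendsto hlim ?_
    filter_upwards [hdig, self_mem_nhdsWithin] with y hy hys
    show F y - ∑ i ∈ range k, summand y i ≤ _
    linarith [F_le_sum_add_of_mem_Ico hn hxn' hx hys hy]
  have hge := sum_range_summand_add_le_F hn hxn' hx0
  have : (0 : ℝ) < 4 ^ onesBefore x k / 4 ^ k := by positivity
  linarith

theorem F_continuity :
    ContinuousWithinAt F (Set.Icc (0 : ℝ) 1) 0 ∧
    (∀ x ∈ Set.Ioo (0 : ℝ) 1, (¬ ∃ n k : ℕ, x = (n : ℝ) / 2 ^ k) →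
      ContinuousWithinAt F (Set.Icc (0 : ℝ) 1) x) ∧
    (∀ x ∈ Set.Ioc (0 : ℝ) 1, (∃ n k : ℕ, x = (n : ℝ) / 2 ^ k) →
      ¬ ContinuousWithinAt F (Set.Icc (0 : ℝ) 1) x) := by
  have hIcc : Set.Icc (0 : ℝ) 1 ⊆ Set.Ico 0 2 := Set.Icc_subset_Ico_right one_lt_two
  refine ⟨?_, fun x hx hnd => ?_, fun x hx hdy hcont => ?_⟩
  · exact continuousWithinAt_F_of_eventually_digit_eq hIcc ⟨le_rfl, zero_le_one⟩ fun M =>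
      nhdsWithin_mono _ Set.Icc_subset_Ici_self (eventually_digit_eq_digit_zero M)
  · exact continuousWithinAt_F_of_eventually_digit_eq hIcc (Set.Ioo_subset_Icc_self hx) fun M =>
      nhdsWithin_le_nhds (eventually_digit_eq fun i _ => two_pow_mul_ne_intCast hx.1 hnd i)
  · obtain ⟨n, k, hn, hxn⟩ := exists_odd_eq_div_two_pow hx.1 (hx.2.trans_lt one_lt_two) hdy
    exact not_continuousWithinAt_Iio_F hn hxn (hx.2.trans_lt one_lt_two)
      (hcont.mono_of_mem_nhdsWithin (Icc_mem_nhdsLT_of_mem hx))
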